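/- Let Δt > 0 and ξ, w, Γ⁰, A, B ∈ ℝ³ be given, and perform one step of the heavy-top midpoint integrator: set Γ̃ := cay(−Δtξ̂)Γ⁰ and Γ¹ := cay(−Δtξ̂)Γ̃, and suppose A, B satisfy d⁻(Δt,ξ,A) − w × Γ̃ = d⁺(Δt,ξ,B); set Π⁰ := d⁺(Δt,ξ,A) and Π¹ := d⁻(Δt,ξ,B). Then the step is a coadjoint update on the semidirect product se(3)* ≅ ℝ³ × ℝ³: there exist a rotation matrix R ∈ SO(3) (i.e. RᵀR = I, det R = 1) and a vector u ∈ ℝ³ such that Π¹ = Rᵀ(Π⁰ − u × Γ⁰) and Γ¹ = RᵀΓ⁰. In particular the coadjoint orbit of (Π⁰, Γ⁰) under SE(3) is preserved. -/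

import Mathlib

open Matrix

noncomputable section

/-- The hat map: the 3×3 skew-symmetric matrix `ξ̂` with `ξ̂ v = ξ × v`. -/
def hat (ξ : Fin 3 → ℝ) : Matrix (Fin 3) (Fin 3) ℝ :=
  !![0, -ξ 2, ξ 1; ξ 2, 0, -ξ 0; -ξ 1, ξ 0, 0]

/-- The Cayley transform `cay(hξ̂) = (I − (h/2)ξ̂)⁻¹ (I + (h/2)ξ̂)`. -/
def cay (h : ℝ) (ξ : Fin 3 → ℝ) : Matrix (Fin 3) (Fin 3) ℝ :=
  (1 - (h / 2) • hat ξ)⁻¹ * (1 + (h / 2) • hat ξ)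

/-- `d⁺(h,ξ,Π) = Π + (h/2) ξ×Π − (h²/4)(ξ·Π)ξ`. -/
def dplus (h : ℝ) (ξ Pv : Fin 3 → ℝ) : Fin 3 → ℝ :=
  Pv + (h / 2) • (ξ ⨯₃ Pv) - (h ^ 2 / 4 * (ξ ⬝ᵥ Pv)) • ξ

/-- `d⁻(h,ξ,Π) = Π − (h/2) ξ×Π − (h²/4)(ξ·Π)ξ`. -/
def dminus (h : ℝ) (ξ Pv : Fin 3 → ℝ) : Fin 3 → ℝ :=
  Pv - (h / 2) • (ξ ⨯₃ Pv) - (h ^ 2 / 4 * (ξ ⬝ᵥ Pv)) • ξ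

/-! The matrix `C := cay(-Δt, ξ)` is the Cayley transform of the skew matrix `-(Δt/2) ξ̂`, so
`C ∈ SO(3)`, and `C d⁺(Δt,ξ,P) = d⁻(Δt,ξ,P)` for every `P` because
`(1 - (Δt/2) ξ̂) d⁺ = (1 + (Δt/2) ξ̂) d⁻`. As a rotation `C` commutes with the cross product, so
`Π¹ = C d⁺(B) = C (C Π⁰ - w × C Γ⁰) = C² (Π⁰ - (Cᵀ w) × Γ⁰)` and `Γ¹ = C² Γ⁰`:
take `R = (Cᵀ)²` and `u = Cᵀ w`. -/

section Cayley

variable {n R : Type*} [DecidableEq n]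

lemma isUnit_det_one_sub_of_transpose_eq_neg [Fintype n] [Field R] [LinearOrder R]
    [IsStrictOrderedRing R] {S : Matrix n n R} (hS : Sᵀ = -S) : IsUnit (1 - S).det := by
  rw [isUnit_iff_ne_zero, Ne, ← exists_mulVec_eq_zero_iff]
  rintro ⟨v, hv, hSv⟩
  have hskew : v ⬝ᵥ S *ᵥ v = 0 := by
    have h : v ⬝ᵥ S *ᵥ v = -(v ⬝ᵥ S *ᵥ v) := by
      conv_lhs => rw [dotProduct_mulVec, ← transpose_transpose S, vecMul_transpose, hS,
        neg_mulVec, neg_dotProduct, dotProduct_comm]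
    linarith
  refine hv (dotProduct_self_eq_zero.mp ?_)
  calc v ⬝ᵥ v = v ⬝ᵥ (1 - S) *ᵥ v := by
        rw [sub_mulVec, one_mulVec, dotProduct_sub, hskew, sub_zero]
    _ = 0 := by rw [hSv, dotProduct_zero]

variable [CommRing R] {S : Matrix n n R}

lemma one_sub_transpose_of_transpose_eq_neg (hS : Sᵀ = -S) : (1 - S)ᵀ = 1 + S := by
  rw [transpose_sub, transpose_one, hS, sub_neg_eq_add]

lemma one_add_transpose_of_transpose_eq_neg (hS : Sᵀ = -S) : (1 + S)ᵀ = 1 - S := by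
  rw [transpose_add, transpose_one, hS, ← sub_eq_add_neg]

variable [Fintype n]

def cayley (S : Matrix n n R) : Matrix n n R :=
  (1 - S)⁻¹ * (1 + S)

lemma cayley_eq_mul_inv (hu : IsUnit (1 - S).det) : cayley S = (1 + S) * (1 - S)⁻¹ := by
  have hcomm : (1 - S) * (1 + S) = (1 + S) * (1 - S) := by noncomm_ring
  calc (1 - S)⁻¹ * (1 + S) = (1 - S)⁻¹ * ((1 + S) * (1 - S)) * (1 - S)⁻¹ := by
        rw [← Matrix.mul_assoc, mul_nonsing_inv_cancel_right _ _ hu]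
    _ = (1 - S)⁻¹ * ((1 - S) * (1 + S)) * (1 - S)⁻¹ := by rw [hcomm]
    _ = (1 + S) * (1 - S)⁻¹ := by rw [nonsing_inv_mul_cancel_left _ _ hu]

lemma cayley_mulVec_eq_of_mulVec_eq (hu : IsUnit (1 - S).det) {x y : n → R}
    (hxy : (1 + S) *ᵥ x = (1 - S) *ᵥ y) : cayley S *ᵥ x = y := by
  rw [cayley, ← mulVec_mulVec, hxy, mulVec_mulVec, nonsing_inv_mul _ hu, one_mulVec]

lemma det_one_add_of_transpose_eq_neg (hS : Sᵀ = -S) : (1 + S).det = (1 - S).det := by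
  rw [← det_transpose, one_add_transpose_of_transpose_eq_neg hS]

lemma cayley_transpose (hS : Sᵀ = -S) (hu : IsUnit (1 - S).det) :
    (cayley S)ᵀ = (1 + S)⁻¹ * (1 - S) := by
  rw [cayley_eq_mul_inv hu, transpose_mul, transpose_nonsing_inv,
    one_sub_transpose_of_transpose_eq_neg hS, one_add_transpose_of_transpose_eq_neg hS]

lemma cayley_transpose_mul_self (hS : Sᵀ = -S) (hu : IsUnit (1 - S).det) :
    (cayley S)ᵀ * cayley S = 1 := by
  have hu' : IsUnit (1 + S).det := by rwa [det_one_add_of_transpose_eq_neg hS]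
  rw [cayley_transpose hS hu, cayley, Matrix.mul_assoc, mul_nonsing_inv_cancel_left _ _ hu,
    nonsing_inv_mul _ hu']

lemma det_cayley (hS : Sᵀ = -S) (hu : IsUnit (1 - S).det) : (cayley S).det = 1 := by
  rw [cayley, det_mul, det_nonsing_inv, det_one_add_of_transpose_eq_neg hS,
    Ring.inverse_mul_cancel _ hu]

end Cayley

lemma transpose_mulVec_cross_mulVec {R : Type*} [CommRing R] (M : Matrix (Fin 3) (Fin 3) R)
    (a b : Fin 3 → R) : Mᵀ *ᵥ ((M *ᵥ a) ⨯₃ (M *ᵥ b)) = M.det • (a ⨯₃ b) := by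
  ext i
  fin_cases i <;>
    simp [mulVec, dotProduct, Fin.sum_univ_three, cross_apply, det_fin_three] <;> ring

lemma mulVec_cross_of_transpose_mul_self_eq_one {R : Type*} [CommRing R]
    {M : Matrix (Fin 3) (Fin 3) R} (hM : Mᵀ * M = 1) (hdet : M.det = 1) (a b : Fin 3 → R) :
    M *ᵥ (a ⨯₃ b) = (M *ᵥ a) ⨯₃ (M *ᵥ b) := by
  calc M *ᵥ (a ⨯₃ b) = M *ᵥ (Mᵀ *ᵥ ((M *ᵥ a) ⨯₃ (M *ᵥ b))) := by
        rw [transpose_mulVec_cross_mulVec, hdet, one_smul]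
    _ = (M *ᵥ a) ⨯₃ (M *ᵥ b) := by rw [mulVec_mulVec, mul_eq_one_comm.mp hM, one_mulVec]

lemma hat_mulVec (ξ v : Fin 3 → ℝ) : hat ξ *ᵥ v = ξ ⨯₃ v := by
  ext i
  fin_cases i <;> simp [hat, mulVec, dotProduct, Fin.sum_univ_three, cross_apply] <;> ring

lemma smul_hat_transpose (c : ℝ) (ξ : Fin 3 → ℝ) : (c • hat ξ)ᵀ = -(c • hat ξ) := by
  ext i j
  fin_cases i <;> fin_cases j <;> simp [hat]

lemma one_add_smul_hat_mulVec_dplus (h : ℝ) (ξ P : Fin 3 → ℝ) :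
    (1 + (-h / 2) • hat ξ) *ᵥ dplus h ξ P = (1 - (-h / 2) • hat ξ) *ᵥ dminus h ξ P := by
  simp only [add_mulVec, sub_mulVec, one_mulVec, smul_mulVec, hat_mulVec, dplus, dminus,
    map_add, map_sub, map_smul, cross_self]
  module

lemma cay_neg_mulVec_dplus (h : ℝ) (ξ P : Fin 3 → ℝ) :
    cay (-h) ξ *ᵥ dplus h ξ P = dminus h ξ P :=
  cayley_mulVec_eq_of_mulVec_eq
    (isUnit_det_one_sub_of_transpose_eq_neg (smul_hat_transpose _ ξ))
    (one_add_smul_hat_mulVec_dplus h ξ P)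

theorem heavy_top_step_is_coadjoint_update_general
    (Δt : ℝ) (ξ w Γ₀ A B Γt Γ₁ Pv₀ Pv₁ : Fin 3 → ℝ)
    (hΓt : Γt = (cay (-Δt) ξ).mulVec Γ₀)
    (hΓ₁ : Γ₁ = (cay (-Δt) ξ).mulVec Γt)
    (hAB : dminus Δt ξ A - w ⨯₃ Γt = dplus Δt ξ B)
    (hPv₀ : Pv₀ = dplus Δt ξ A)
    (hPv₁ : Pv₁ = dminus Δt ξ B) :
    ∃ (R : Matrix (Fin 3) (Fin 3) ℝ) (u : Fin 3 → ℝ),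
      Rᵀ * R = 1 ∧ R.det = 1 ∧
      Pv₁ = Rᵀ.mulVec (Pv₀ - u ⨯₃ Γ₀) ∧ Γ₁ = Rᵀ.mulVec Γ₀ := by
  have hS := smul_hat_transpose (-Δt / 2) ξ
  have hu := isUnit_det_one_sub_of_transpose_eq_neg hS
  have hC : (cay (-Δt) ξ)ᵀ * cay (-Δt) ξ = 1 := cayley_transpose_mul_self hS hu
  have hdetC : (cay (-Δt) ξ).det = 1 := det_cayley hS hu
  have hPv : dminus Δt ξ A = cay (-Δt) ξ *ᵥ Pv₀ := by rw [hPv₀, cay_neg_mulVec_dplus]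
  rw [hPv₁, ← cay_neg_mulVec_dplus, ← hAB, hPv, hΓ₁, hΓt]
  generalize cay (-Δt) ξ = C at hC hdetC ⊢
  have hC' : C * Cᵀ = 1 := mul_eq_one_comm.mp hC
  refine ⟨Cᵀ * Cᵀ, Cᵀ *ᵥ w, ?_, ?_, ?_, ?_⟩
  · rw [transpose_mul, transpose_transpose, Matrix.mul_assoc, ← Matrix.mul_assoc C Cᵀ, hC',
      Matrix.one_mul, hC']
  · rw [det_mul, det_transpose, hdetC, mul_one]
  · rw [transpose_mul, transpose_transpose, ← mulVec_mulVec]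
    congr 1
    rw [mulVec_sub, mulVec_cross_of_transpose_mul_self_eq_one hC hdetC, mulVec_mulVec, hC',
      one_mulVec]
  · rw [transpose_mul, transpose_transpose, mulVec_mulVec]

/-- One step of the heavy-top midpoint integrator is a coadjoint update on
`se(3)* ≅ ℝ³ × ℝ³`: there are `R ∈ SO(3)` and `u ∈ ℝ³` with
`Π¹ = Rᵀ(Π⁰ − u × Γ⁰)` and `Γ¹ = RᵀΓ⁰`.  In particular the `SE(3)`-coadjoint orbit
of `(Π⁰, Γ⁰)` is preserved. -/
theorem heavy_top_step_is_coadjoint_update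
    (Δt : ℝ) (hΔt : 0 < Δt) (ξ w Γ₀ A B Γt Γ₁ Pv₀ Pv₁ : Fin 3 → ℝ)
    (hΓt : Γt = (cay (-Δt) ξ).mulVec Γ₀)
    (hΓ₁ : Γ₁ = (cay (-Δt) ξ).mulVec Γt)
    (hAB : dminus Δt ξ A - w ⨯₃ Γt = dplus Δt ξ B)
    (hPv₀ : Pv₀ = dplus Δt ξ A)
    (hPv₁ : Pv₁ = dminus Δt ξ B) :
    ∃ (R : Matrix (Fin 3) (Fin 3) ℝ) (u : Fin 3 → ℝ),
      Rᵀ * R = 1 ∧ R.det = 1 ∧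
      Pv₁ = Rᵀ.mulVec (Pv₀ - u ⨯₃ Γ₀) ∧ Γ₁ = Rᵀ.mulVec Γ₀ :=
  heavy_top_step_is_coadjoint_update_general Δt ξ w Γ₀ A B Γt Γ₁ Pv₀ Pv₁ hΓt hΓ₁ hAB hPv₀ hPv₁
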